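/- Processing vertices of a finite DAG in topological order and applying the update cost[v] ← min over already-processed predecessors u of max(cost[u], w(u,v)), starting from cost[s] = 0, yields upon termination cost[v] = the minimum over all s-to-v paths of the maximum edge weight along the path, for every vertex v reachable from s. -/

import Mathlib

/-!
The min–max path cost satisfies the same recursion as `cost`: the last edge of a path to
`v ≠ s` comes from a predecessor `u`, and `max · (w u v)` commutes with infima in `ℝ≥0∞`.
Since every edge goes forward in the topological order, this recursion determines its
solution, by strong induction along the order.
-/

/-- `PathCost E w s v c` holds iff there is a directed path from `s` to `v`
whose maximum edge weight is `c` (empty path has cost `0`). Weights live in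
`ℝ≥0∞`, so unreachable vertices get `sInf ∅ = ∞`. -/
inductive PathCost {n : ℕ} (E : Fin n → Fin n → Prop) (w : Fin n → Fin n → ENNReal)
    (s : Fin n) : Fin n → ENNReal → Prop
  | nil : PathCost E w s s 0
  | cons {u v : Fin n} {c : ENNReal} :
      PathCost E w s u c → E u v → PathCost E w s v (max c (w u v))

namespace PathCost

variable {n : ℕ} {E : Fin n → Fin n → Prop} {w : Fin n → Fin n → ENNReal} {s : Fin n}

theorem sInf_self : sInf {c | PathCost E w s s c} = 0 :=
  nonpos_iff_eq_zero.mp (sInf_le nil)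

theorem sInf_eq_iInf_pred {v : Fin n} (hv : v ≠ s) :
    sInf {c | PathCost E w s v c} =
      ⨅ (u : Fin n) (_ : E u v), max (sInf {c | PathCost E w s u c}) (w u v) := by
  apply le_antisymm
  · refine le_iInf₂ fun u huv => ?_
    calc sInf {c | PathCost E w s v c}
        ≤ ⨅ c : {c | PathCost E w s u c}, max (c : ENNReal) (w u v) :=
          le_iInf fun ⟨c, hc⟩ => sInf_le (cons hc huv)
      _ = max (sInf {c | PathCost E w s u c}) (w u v) := by rw [sInf_eq_iInf', iInf_sup_eq]
  · refine le_sInf fun c hc => ?_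
    cases hc with
    | nil => exact absurd rfl hv
    | @cons u _ c hp huv =>
      exact iInf₂_le_of_le u huv (max_le_max_right _ (sInf_le hp))

end PathCost

theorem topological_dp_correct_general {n : ℕ} (E : Fin n → Fin n → Prop)
    (w : Fin n → Fin n → ENNReal) (s : Fin n)
    (hE : ∀ u v, E u v → u < v)
    (cost : Fin n → ENNReal) (hcost0 : cost s = 0)
    (hupd : ∀ v, v ≠ s → cost v = ⨅ (u : Fin n) (_ : E u v), max (cost u) (w u v)) :
    ∀ v, cost v = sInf {c | PathCost E w s v c} := by
  intro v
  induction v using WellFoundedLT.induction with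
  | _ v ih =>
    by_cases hv : v = s
    · rw [hv, hcost0, PathCost.sInf_self]
    · rw [hupd v hv, PathCost.sInf_eq_iInf_pred hv]
      exact iInf_congr fun u => iInf_congr fun huv => by rw [ih u (hE u v huv)]

/-- Correctness of the topological-order dynamic program (Theorem 1 of the paper):
in a finite DAG whose edges respect the index (topological) order, if `cost`
satisfies `cost s = 0` and, for `v ≠ s`,
`cost v = ⨅ predecessors u, max (cost u) (w u v)` (an empty infimum being `∞`),
then for every vertex `v`, `cost v` is the minimum over all `s`-to-`v` paths of
the maximum edge weight (and `∞` for unreachable vertices). -/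
theorem topological_dp_correct {n : ℕ} (E : Fin n → Fin n → Prop)
    (w : Fin n → Fin n → ENNReal) (s : Fin n)
    (hE : ∀ u v, E u v → u < v) (hs : ∀ u, ¬ E u s)
    (cost : Fin n → ENNReal) (hcost0 : cost s = 0)
    (hupd : ∀ v, v ≠ s → cost v = ⨅ (u : Fin n) (_ : E u v), max (cost u) (w u v)) :
    ∀ v, cost v = sInf {c | PathCost E w s v c} :=
  topological_dp_correct_general E w s hE cost hcost0 hupd
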